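/- arXiv:2510.23573 — 3 statements merged into one kernel-verified Lean document; each statement's English description precedes it below -/
import Mathlib

section
/- Let w' be a word, let a'_0 a'_1 ... a'_{n^3} be a monotone subword of distinct values of w' each occurring at least twice in w', and suppose there is an index j with 0 ≤ j ≤ n^3 - n^2 such that the second occurrences in w' of all the values a'_j, ..., a'_{j+n^2} occur after the first occurrence of a'_{j+n^2}. Then w' contains one of the patterns (01...n)^{e1}(01...n)^{e2} with e1,e2 ∈ {id, rev}. -/
/-- Standardisation of a word: replace the smallest value by 0, next smallest by 1, etc. -/
def stdz (w : List ℕ) : List ℕ := w.map (fun x => ((w.filter (· < x)).dedup).length)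

/-- A word `w` contains the pattern `p` if some subword of `w` standardises to `p`. -/
def Contains (w p : List ℕ) : Prop := ∃ u : List ℕ, u.Sublist w ∧ stdz u = p

/-- Number of repeats: indices having an earlier equal entry. -/
def repeats (w : List ℕ) : ℕ :=
  (Finset.univ.filter (fun i : Fin w.length =>
    ∃ j : Fin w.length, j < i ∧ w.get j = w.get i)).card

/-- Maximum value of a word. -/
def maxVal (w : List ℕ) : ℕ := w.foldr max 0

/-- Skew sum: entries of `u` shifted above those of `v`, with `u` first. -/
def skewSum (u v : List ℕ) : List ℕ := u.map (· + maxVal v) ++ v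

/-- Direct sum: `u` first, entries of `v` shifted above those of `u`. -/
def directSum (u v : List ℕ) : List ℕ := u ++ v.map (· + maxVal u)

/-- Iterated skew sum of `m` copies of `u`. -/
def skewPow (u : List ℕ) : ℕ → List ℕ
  | 0 => []
  | m + 1 => skewSum u (skewPow u m)

/-- Iterated direct sum of `m` copies of `u`. -/
def dirPow (u : List ℕ) : ℕ → List ℕ
  | 0 => []
  | m + 1 => directSum u (dirPow u m)

/-- The pattern 0^m 1^m ... n^m. -/
def repPat (m n : ℕ) : List ℕ := (List.range (n + 1)).flatMap (fun i => List.replicate m i)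

/-- Position of the first occurrence of `v` in `w`. -/
def firstOcc (w : List ℕ) (v : ℕ) : ℕ := w.idxOf v

/-- Position of the second occurrence of `v` in `w`. -/
def secondOcc (w : List ℕ) (v : ℕ) : ℕ :=
  w.idxOf v + 1 + (w.drop (w.idxOf v + 1)).idxOf v

/-!
The second occurrences of the `n ^ 2 + 1` values `a'_j, …, a'_{j+n²}` all come after every first
occurrence of these values, and they are pairwise distinct positions. By Erdős–Szekeres, `n + 1`
of these values have their second occurrences in monotone order of position. The first
occurrences of those `n + 1` values followed by their second occurrences form a subword
`v₀ … vₙ v_{σ 0} … v_{σ n}` with `σ` the identity or the reversal, and since the values `vᵢ`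
are themselves monotone in `i`, it standardises to `(01…n)^{e₁} (01…n)^{e₂}`.
-/

open Finset

section ErdosSzekeres

variable {ι α : Type*} [LinearOrder ι] [LinearOrder α]

/- Erdős–Szekeres by labelling: indices with the same label `maxIncLengthEndingAt` form a
decreasing subsequence, so if all labels are at most `r`, some label is shared by `> q` indices. -/
open scoped Classical in
noncomputable def maxIncLengthEndingAt (f : ι → α) (s : Finset ι) (i : ι) : ℕ :=
  (s.powerset.filter fun t : Finset ι => IsGreatest (t : Set ι) i ∧ StrictMonoOn f t).sup card

variable {f : ι → α} {s : Finset ι} {i k : ι}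

theorem exists_strictMonoOn_card_eq_maxIncLengthEndingAt (hi : i ∈ s) :
    ∃ t ⊆ s, IsGreatest (t : Set ι) i ∧ StrictMonoOn f t ∧ #t = maxIncLengthEndingAt f s i := by
  classical
  obtain ⟨t, ht, hmax⟩ := exists_mem_eq_sup
    (s.powerset.filter (fun t : Finset ι => IsGreatest (t : Set ι) i ∧ StrictMonoOn f t))
    ⟨{i}, by simp [hi, isGreatest_singleton]⟩ card
  rw [mem_filter, mem_powerset] at ht
  exact ⟨t, ht.1, ht.2.1, ht.2.2, hmax.symm⟩

theorem card_le_maxIncLengthEndingAt {t : Finset ι} (hts : t ⊆ s)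
    (ht : IsGreatest (t : Set ι) i) (hf : StrictMonoOn f t) :
    #t ≤ maxIncLengthEndingAt f s i := by
  classical
  rw [maxIncLengthEndingAt]
  exact le_sup (f := card) (mem_filter.2 ⟨mem_powerset.2 hts, ht, hf⟩)

theorem one_le_maxIncLengthEndingAt (hi : i ∈ s) : 1 ≤ maxIncLengthEndingAt f s i :=
  card_le_maxIncLengthEndingAt (t := {i}) (by simpa using hi) (by simp [isGreatest_singleton])
    (by simp)

theorem maxIncLengthEndingAt_lt (hi : i ∈ s) (hk : k ∈ s) (hik : i < k) (hf : f i < f k) :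
    maxIncLengthEndingAt f s i < maxIncLengthEndingAt f s k := by
  classical
  obtain ⟨t, hts, hti, htf, htcard⟩ := exists_strictMonoOn_card_eq_maxIncLengthEndingAt (f := f) hi
  have hkt : k ∉ t := fun h => (hti.2 h).not_gt hik
  have hgreat : IsGreatest (insert k t : Set ι) k :=
    ⟨Set.mem_insert _ _, by
      rintro x (rfl | hx)
      exacts [le_rfl, (hti.2 hx).trans hik.le]⟩
  have hmono : StrictMonoOn f (insert k t : Set ι) := by
    rintro x (rfl | hx) y (rfl | hy) hxy
    · exact absurd hxy (lt_irrefl _)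
    · exact absurd ((hti.2 hy).trans hik.le) hxy.not_ge
    · exact (htf.monotoneOn hx hti.1 (hti.2 hx)).trans_lt hf
    · exact htf hx hy hxy
  have := card_le_maxIncLengthEndingAt (insert_subset hk hts) (by simpa using hgreat)
    (by simpa using hmono)
  rwa [card_insert_of_notMem hkt, htcard] at this

theorem erdos_szekeres {r q : ℕ} (hf : Set.InjOn f s) (hs : r * q < #s) :
    (∃ t ⊆ s, r < #t ∧ StrictMonoOn f t) ∨ (∃ t ⊆ s, q < #t ∧ StrictAntiOn f t) := by
  classical
  by_cases hlong : ∃ i ∈ s, r < maxIncLengthEndingAt f s i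
  · obtain ⟨i, hi, hr⟩ := hlong
    obtain ⟨t, hts, -, htf, htcard⟩ := exists_strictMonoOn_card_eq_maxIncLengthEndingAt (f := f) hi
    exact Or.inl ⟨t, hts, htcard ▸ hr, htf⟩
  simp only [not_exists, not_and, not_lt] at hlong
  have hmaps : ∀ i ∈ s, maxIncLengthEndingAt f s i ∈ Icc 1 r := fun i hi =>
    mem_Icc.2 ⟨one_le_maxIncLengthEndingAt hi, hlong i hi⟩
  obtain ⟨y, -, hy⟩ := exists_lt_card_fiber_of_mul_lt_card_of_maps_to hmaps (by simpa using hs)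
  refine Or.inr ⟨_, filter_subset _ s, hy, fun x hx z hz hxz => ?_⟩
  simp only [coe_filter, Set.mem_ofPred_eq] at hx hz
  refine (lt_or_gt_of_ne fun h => hxz.ne' (hf hz.1 hx.1 h)).resolve_right fun h => ?_
  exact (maxIncLengthEndingAt_lt hx.1 hz.1 hxz h).ne (hx.2.trans hz.2.symm)

end ErdosSzekeres

theorem Finset.exists_strictMonoOn_mapsTo_of_lt_card {t : Finset ℕ} {n : ℕ} (h : n < #t) :
    ∃ c : ℕ → ℕ, StrictMonoOn c (Set.Iic n) ∧ Set.MapsTo c (Set.Iic n) t := by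
  have hfin : (Set.ofPred (· ∈ t)).Finite := t.finite_toSet
  have hcard : hfin.toFinset = t := by ext; simp
  have hsub : Set.Iic n ⊆ Set.Iio hfin.toFinset.card := fun i hi => by
    rw [hcard, Set.mem_Iio]; exact (Set.mem_Iic.1 hi).trans_lt h
  exact ⟨Nat.nth (· ∈ t), (Nat.nth_strictMonoOn hfin).mono hsub,
    fun i hi => Nat.nth_mem_of_lt_card hfin (hsub hi)⟩

theorem exists_monotone_subseq_of_sq_lt_card {α : Type*} [LinearOrder α] {f : ℕ → α}
    {s : Finset ℕ} {n : ℕ} (hf : Set.InjOn f s) (hs : n * n < #s) :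
    ∃ c : ℕ → ℕ, StrictMonoOn c (Set.Iic n) ∧ Set.MapsTo c (Set.Iic n) s ∧
      (StrictMonoOn (f ∘ c) (Set.Iic n) ∨ StrictAntiOn (f ∘ c) (Set.Iic n)) := by
  rcases erdos_szekeres hf hs with ⟨t, hts, ht, hft⟩ | ⟨t, hts, ht, hft⟩
  all_goals
    obtain ⟨c, hc, hct⟩ := Finset.exists_strictMonoOn_mapsTo_of_lt_card ht
    refine ⟨c, hc, hct.mono_right (by simpa using hts), ?_⟩
  · exact .inl (hft.comp hc hct)
  · exact .inr (hft.comp_strictMonoOn hc hct)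

theorem List.map_getD_sublist {α : Type*} {l : List α} {is : List ℕ}
    (h : is.Pairwise (· < ·)) (hlt : ∀ i ∈ is, i < l.length) (d : α) :
    (is.map (l.getD · d)).Sublist l := by
  have := List.map_getElem_sublist (l := l) (is := is.pmap Fin.mk hlt)
    ((List.pairwise_pmap hlt).2 (h.imp fun hij _ _ => hij))
  convert this using 1
  rw [List.map_pmap, List.pmap_eq_map_attach, ← List.attach_map_val (l := is)]
  exact List.map_congr_left fun x _ => List.getD_eq_getElem _ _ _

section Occurrences

variable {w : List ℕ} {v : ℕ}

theorem getElem?_firstOcc (h : v ∈ w) : w[firstOcc w v]? = some v := by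
  rw [firstOcc, List.getElem?_eq_getElem (List.idxOf_lt_length_of_mem h), List.getElem_idxOf]

theorem List.mem_drop_idxOf_add_one_of_two_le_count (h : 2 ≤ w.count v) :
    v ∈ w.drop (w.idxOf v + 1) := by
  have hv : v ∈ w := List.count_pos_iff.1 (by omega)
  have hlt := List.idxOf_lt_length_of_mem hv
  have hnot : v ∉ w.take (w.idxOf v) := by simp [List.mem_take_iff_idxOf_lt hv]
  have hcount : w.count v = (w.drop (w.idxOf v + 1)).count v + 1 := by
    conv_lhs => rw [← List.take_append_drop (w.idxOf v) w, List.drop_eq_getElem_cons hlt,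
      List.getElem_idxOf hlt]
    simp [List.count_eq_zero.2 hnot]
  exact List.count_pos_iff.1 (by omega)

theorem getElem?_secondOcc (h : 2 ≤ w.count v) : w[secondOcc w v]? = some v := by
  have hd := List.mem_drop_idxOf_add_one_of_two_le_count h
  rw [secondOcc, ← List.getElem?_drop, List.getElem?_eq_getElem (List.idxOf_lt_length_of_mem hd),
    List.getElem_idxOf]

end Occurrences

theorem stdz_map_of_strictMonoOn {f : ℕ → ℕ} {l : List ℕ} (hf : StrictMonoOn f {x | x ∈ l}) :
    stdz (l.map f) = stdz l := by
  rw [stdz, stdz, List.map_map]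
  refine List.map_congr_left fun x hx => ?_
  have hfilter : (l.map f).filter (· < f x) = (l.filter (· < x)).map f := by
    rw [List.filter_map]
    congr 1
    exact List.filter_congr fun y hy => by simp [hf.lt_iff_lt hy hx]
  have himage : ((l.filter (· < x)).map f).toFinset = (l.filter (· < x)).toFinset.image f := by
    ext; simp
  simp only [Function.comp_apply, hfilter, ← List.card_toFinset, himage]
  exact Finset.card_image_of_injOn
    (hf.injOn.mono fun y hy => (List.mem_filter.1 (List.mem_toFinset.1 hy)).1)

theorem stdz_eq_self {l : List ℕ} {m : ℕ} (hl : ∀ x, x ∈ l ↔ x < m) : stdz l = l := by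
  conv_rhs => rw [← List.map_id l]
  refine List.map_congr_left fun x hx => ?_
  have hrange : (l.filter (· < x)).toFinset = Finset.range x := by
    ext y
    simp only [List.mem_toFinset, List.mem_filter, hl, decide_eq_true_eq, Finset.mem_range]
    have := (hl x).1 hx
    omega
  rw [← List.card_toFinset, hrange, Finset.card_range, id]

theorem stdz_map_of_strictAntiOn {v : ℕ → ℕ} {n : ℕ} {l : List ℕ}
    (hv : StrictAntiOn v (Set.Iic n)) (hl : ∀ x ∈ l, x ≤ n) :
    stdz (l.map v) = stdz (l.map (n - ·)) := by
  have hmono : StrictMonoOn (fun i => v (n - i)) (Set.Iic n) := fun i _ k hk hik =>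
    hv (Set.mem_Iic.2 (Nat.sub_le n k)) (Set.mem_Iic.2 (Nat.sub_le n i))
      (by rw [Set.mem_Iic] at hk; omega)
  have hcomp : l.map v = (l.map (n - ·)).map (fun i => v (n - i)) := by
    rw [List.map_map]
    exact List.map_congr_left fun x hx => by simp [Nat.sub_sub_self (hl x hx)]
  rw [hcomp, stdz_map_of_strictMonoOn (hmono.mono ?_)]
  intro x hx
  obtain ⟨y, -, rfl⟩ := List.mem_map.1 hx
  exact Set.mem_Iic.2 (Nat.sub_le n y)

theorem List.reverse_range_succ (n : ℕ) :
    (List.range (n + 1)).reverse = (List.range (n + 1)).map (n - ·) := by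
  simp [List.range_eq_range', List.reverse_range']

theorem exists_stdz_map_range_append {n : ℕ} {v : ℕ → ℕ}
    (hv : StrictMonoOn v (Set.Iic n) ∨ StrictAntiOn v (Set.Iic n)) {e : List ℕ → List ℕ}
    (he : e ∈ ({id, List.reverse} : Set (List ℕ → List ℕ))) :
    ∃ e₁ ∈ ({id, List.reverse} : Set (List ℕ → List ℕ)),
      ∃ e₂ ∈ ({id, List.reverse} : Set (List ℕ → List ℕ)),
        stdz ((List.range (n + 1) ++ e (List.range (n + 1))).map v) =
          e₁ (List.range (n + 1)) ++ e₂ (List.range (n + 1)) := by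
  have hR : ∀ x, x ∈ List.range (n + 1) ++ e (List.range (n + 1)) ↔ x < n + 1 := by
    rcases he with rfl | rfl <;> simp
  have hRrev : ∀ x,
      x ∈ (List.range (n + 1)).reverse ++ e (List.range (n + 1)).reverse ↔ x < n + 1 := by
    rcases he with rfl | rfl <;> simp
  rcases hv with hv | hv
  · refine ⟨id, .inl rfl, e, he, ?_⟩
    rw [stdz_map_of_strictMonoOn (hv.mono fun x hx => ?_), stdz_eq_self hR]
    · rfl
    · exact Set.mem_Iic.2 (Nat.lt_succ_iff.1 ((hR x).1 hx))
  · have hmap : (List.range (n + 1) ++ e (List.range (n + 1))).map (n - ·) =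
        (List.range (n + 1)).reverse ++ e (List.range (n + 1)).reverse := by
      rcases he with rfl | rfl <;>
        simp only [List.map_append, List.map_reverse, id, ← List.reverse_range_succ]
    rw [stdz_map_of_strictAntiOn hv fun x hx => Nat.lt_succ_iff.1 ((hR x).1 hx), hmap,
      stdz_eq_self hRrev]
    rcases he with rfl | rfl
    · exact ⟨List.reverse, .inr rfl, List.reverse, .inr rfl, rfl⟩
    · exact ⟨List.reverse, .inr rfl, id, .inl rfl, by simp⟩

theorem List.Pairwise.map_of_strictMonoOn {f : ℕ → ℕ} {n : ℕ} {l : List ℕ}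
    (hl : l.Pairwise (· < ·)) (hle : ∀ x ∈ l, x ≤ n) (hf : StrictMonoOn f (Set.Iic n)) :
    (l.map f).Pairwise (· < ·) :=
  List.pairwise_map.2 <| hl.imp_of_mem fun ha hb hab =>
    hf (Set.mem_Iic.2 (hle _ ha)) (Set.mem_Iic.2 (hle _ hb)) hab

theorem contains_range_append_of_positions (w : List ℕ) (n : ℕ) (v P Q : ℕ → ℕ)
    (hv : StrictMonoOn v (Set.Iic n) ∨ StrictAntiOn v (Set.Iic n))
    (hP : StrictMonoOn P (Set.Iic n))
    (hQ : StrictMonoOn Q (Set.Iic n) ∨ StrictAntiOn Q (Set.Iic n))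
    (hPQ : ∀ i ≤ n, ∀ k ≤ n, P i < Q k)
    (hwP : ∀ i ≤ n, w[P i]? = some (v i)) (hwQ : ∀ i ≤ n, w[Q i]? = some (v i)) :
    ∃ e₁ ∈ ({id, List.reverse} : Set (List ℕ → List ℕ)),
      ∃ e₂ ∈ ({id, List.reverse} : Set (List ℕ → List ℕ)),
        Contains w (e₁ (List.range (n + 1)) ++ e₂ (List.range (n + 1))) := by
  have hR : ∀ x ∈ List.range (n + 1), x ≤ n := fun x hx => Nat.lt_succ_iff.1 (List.mem_range.1 hx)
  obtain ⟨e, he, hQe⟩ : ∃ e ∈ ({id, List.reverse} : Set (List ℕ → List ℕ)),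
      ((e (List.range (n + 1))).map Q).Pairwise (· < ·) := by
    rcases hQ with hQ | hQ
    · exact ⟨id, .inl rfl, List.pairwise_lt_range.map_of_strictMonoOn hR hQ⟩
    · refine ⟨List.reverse, .inr rfl, ?_⟩
      rw [List.map_reverse, List.pairwise_reverse]
      exact List.pairwise_map.2 <| List.pairwise_lt_range.imp_of_mem fun ha hb hab =>
        hQ (Set.mem_Iic.2 (hR _ ha)) (Set.mem_Iic.2 (hR _ hb)) hab
  have heR : ∀ x ∈ e (List.range (n + 1)), x ≤ n := by
    rcases he with rfl | rfl <;> simp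
  obtain ⟨e₁, he₁, e₂, he₂, hstd⟩ := exists_stdz_map_range_append hv he
  refine ⟨e₁, he₁, e₂, he₂, _, ?_, hstd⟩
  set idx := (List.range (n + 1)).map P ++ (e (List.range (n + 1))).map Q
  have hidx : idx.Pairwise (· < ·) := by
    refine List.pairwise_append.2 ⟨List.pairwise_lt_range.map_of_strictMonoOn hR hP, hQe, ?_⟩
    simp only [List.mem_map]
    rintro _ ⟨i, hi, rfl⟩ _ ⟨k, hk, rfl⟩
    exact hPQ i (hR i hi) k (heR k hk)
  have hvals : idx.map (w.getD · 0) = (List.range (n + 1) ++ e (List.range (n + 1))).map v := by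
    simp only [idx, List.map_append, List.map_map]
    congr 1 <;> refine List.map_congr_left fun i hi => ?_
    · simp [List.getD_eq_getElem?_getD, hwP i (hR i hi)]
    · simp [List.getD_eq_getElem?_getD, hwQ i (heR i hi)]
  rw [← hvals]
  refine List.map_getD_sublist hidx (fun i hi => ?_) 0
  simp only [idx, List.mem_append, List.mem_map] at hi
  rcases hi with ⟨k, hk, rfl⟩ | ⟨k, hk, rfl⟩
  · exact (List.getElem?_eq_some_iff.1 (hwP k (hR k hk))).1
  · exact (List.getElem?_eq_some_iff.1 (hwQ k (heR k hk))).1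

theorem stmt_4 (n : ℕ) (w' : List ℕ) (a : ℕ → ℕ)
    (hcount : ∀ i ≤ n ^ 3, 2 ≤ w'.count (a i))
    (hmono : (∀ i j, i < j → j ≤ n ^ 3 → a i < a j) ∨
             (∀ i j, i < j → j ≤ n ^ 3 → a j < a i))
    (hpos : ∀ i j, i < j → j ≤ n ^ 3 → firstOcc w' (a i) < firstOcc w' (a j))
    (j : ℕ) (hj : j + n ^ 2 ≤ n ^ 3)
    (hsec : ∀ i, j ≤ i → i ≤ j + n ^ 2 →
      firstOcc w' (a (j + n ^ 2)) < secondOcc w' (a i)) :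
    ∃ e₁ ∈ ({id, List.reverse} : Set (List ℕ → List ℕ)),
      ∃ e₂ ∈ ({id, List.reverse} : Set (List ℕ → List ℕ)),
        Contains w' (e₁ (List.range (n + 1)) ++ e₂ (List.range (n + 1))) := by
  have ha : StrictMonoOn a (Set.Iic (n ^ 3)) ∨ StrictAntiOn a (Set.Iic (n ^ 3)) :=
    hmono.imp (fun h _ _ k hk hik => h _ k hik hk) (fun h _ _ k hk hik => h _ k hik hk)
  have hwindow : ∀ i ∈ Icc j (j + n ^ 2), i ≤ n ^ 3 := fun i hi => (mem_Icc.1 hi).2.trans hj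
  have hinj : Set.InjOn (fun i => secondOcc w' (a i)) (Icc j (j + n ^ 2)) := fun i hi k hk h =>
    ha.elim (·.injOn) (·.injOn) (hwindow i hi) (hwindow k hk) <| Option.some_injective _ <| by
      rw [← getElem?_secondOcc (hcount i (hwindow i hi)), ← getElem?_secondOcc
        (hcount k (hwindow k hk))]
      exact congrArg (w'[·]?) h
  obtain ⟨c, hc, hcS, hQ⟩ := exists_monotone_subseq_of_sq_lt_card (n := n) hinj
    (by rw [Nat.card_Icc, sq]; omega)
  have hcj : ∀ i ≤ n, j ≤ c i ∧ c i ≤ j + n ^ 2 := fun i hi => mem_Icc.1 (hcS (Set.mem_Iic.2 hi))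
  have hcn : Set.MapsTo c (Set.Iic n) (Set.Iic (n ^ 3)) := fun i hi => hwindow _ (hcS hi)
  have hcount_c : ∀ i ≤ n, 2 ≤ w'.count (a (c i)) := fun i hi => hcount _ (hcn (Set.mem_Iic.2 hi))
  have hfirst_le : ∀ i ≤ n, firstOcc w' (a (c i)) ≤ firstOcc w' (a (j + n ^ 2)) := fun i hi =>
    (hcj i hi).2.eq_or_lt.elim (fun h => h ▸ le_rfl) fun h => (hpos _ _ h hj).le
  refine contains_range_append_of_positions w' n (a ∘ c) (fun i => firstOcc w' (a (c i)))
    (fun i => secondOcc w' (a (c i))) (ha.imp (·.comp hc hcn) (·.comp_strictMonoOn hc hcn))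
    (fun i hi k hk hik => hpos _ _ (hc hi hk hik) (hcn hk)) hQ
    (fun i hi k hk => (hfirst_le i hi).trans_lt (hsec _ (hcj k hk).1 (hcj k hk).2))
    (fun i hi => getElem?_firstOcc (List.count_pos_iff.1 ((hcount_c i hi).trans_lt' two_pos)))
    (fun i hi => getElem?_secondOcc (hcount_c i hi))
end

section
/- The word q = p^{⊖n^2} · (r^{⊖n})^{⊕n}, where p = 12...n^2 and r = (1^{⊕n})^{⊖n}, does not contain any of the patterns (01...n)^{e1}(01...n)^{e2} for e1, e2 ∈ {id, rev}. -/
/-!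
Write `A = p^{⊖n²}` and `B = (r^{⊖n})^{⊕n}`. Both are permutations of `[n⁴]`, so an
occurrence of `u^{e₁} u^{e₂}` puts its first half in `A` and its second half in `B`, on the same
`n + 1` values. Cut the values into blocks of `n²` consecutive ones. In `A`, an increasing
subword lies in one block and a decreasing one meets every block at most once. In `B`, the
values of one block form a single shifted copy of `r`, whose monotone subwords have length at
most `n`. The `n` copies of `r^{⊖n}` in `B` are blocks of width `n³`: an increasing subword of
`B` meets each of them in at most one block of width `n²`, and a decreasing one stays inside one
of them, which holds only `n` blocks of width `n²`. So in all four cases there are at most `n`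
values.
-/

open scoped List

lemma maxVal_append (u v : List ℕ) : maxVal (u ++ v) = max (maxVal u) (maxVal v) := by
  induction u with
  | nil => simp [maxVal]
  | cons a t ih =>
    simp only [maxVal, List.foldr_cons, List.cons_append] at *
    rw [ih, max_assoc]

lemma maxVal_map_add {u : List ℕ} (hu : u ≠ []) (s : ℕ) :
    maxVal (u.map (· + s)) = maxVal u + s := by
  induction u with
  | nil => exact absurd rfl hu
  | cons a t ih =>
    rcases eq_or_ne t [] with rfl | ht
    · simp [maxVal]
    · simp only [List.map_cons, maxVal, List.foldr_cons] at *
      rw [ih ht, Nat.add_max_add_right]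

lemma le_maxVal {a : ℕ} {u : List ℕ} (h : a ∈ u) : a ≤ maxVal u := by
  induction u with
  | nil => simp at h
  | cons b t ih =>
    simp only [maxVal, List.foldr_cons] at *
    rcases List.mem_cons.1 h with rfl | h
    · exact le_max_left _ _
    · exact (ih h).trans (le_max_right _ _)

lemma maxVal_range'_one (k : ℕ) : maxVal (List.range' 1 k) = k := by
  induction k with
  | zero => rfl
  | succ k ih => rw [List.range'_concat, maxVal_append, ih]; simp [maxVal, Nat.add_comm]

lemma dirPow_singleton_one (m : ℕ) : dirPow [1] m = List.range' 1 m := by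
  induction m with
  | zero => rfl
  | succ m ih =>
    rw [dirPow, directSum, ih, List.range'_succ]
    simpa [maxVal, Nat.add_comm] using List.map_add_range' (a := 1) 1 m 1

lemma maxVal_skewPow (x : List ℕ) (m : ℕ) : maxVal (skewPow x m) = m * maxVal x := by
  induction m with
  | zero => simp [skewPow, maxVal]
  | succ m ih =>
    rw [skewPow, skewSum, maxVal_append, ih]
    rcases eq_or_ne x [] with rfl | hx
    · simp [maxVal]
    · rw [maxVal_map_add hx]; grind

lemma skewPow_succ' (x : List ℕ) (m : ℕ) :
    skewPow x (m + 1) = x.map (· + m * maxVal x) ++ skewPow x m := by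
  rw [skewPow, skewSum, maxVal_skewPow]

lemma dirPow_succ' (x : List ℕ) (m : ℕ) :
    dirPow x (m + 1) = dirPow x m ++ x.map (· + m * maxVal x) := by
  induction m with
  | zero => simp [dirPow, directSum]
  | succ m ih =>
    conv_lhs => rw [dirPow, directSum, ih, List.map_append, List.map_map, ← List.append_assoc]
    congr 2
    funext b
    simp only [Function.comp_apply]
    ring

lemma mem_skewPow {x : List ℕ} {m a : ℕ} (ha : a ∈ skewPow x m) :
    ∃ j < m, ∃ b ∈ x, a = b + j * maxVal x := by
  induction m with
  | zero => simp [skewPow] at ha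
  | succ m ih =>
    rw [skewPow_succ', List.mem_append, List.mem_map] at ha
    rcases ha with ⟨b, hb, rfl⟩ | ha
    · exact ⟨m, by omega, b, hb, rfl⟩
    · obtain ⟨j, hj, h⟩ := ih ha
      exact ⟨j, by omega, h⟩

lemma mem_dirPow {x : List ℕ} {m a : ℕ} (ha : a ∈ dirPow x m) :
    ∃ j < m, ∃ b ∈ x, a = b + j * maxVal x := by
  induction m with
  | zero => simp [dirPow] at ha
  | succ m ih =>
    rw [dirPow_succ', List.mem_append, List.mem_map] at ha
    rcases ha with ha | ⟨b, hb, rfl⟩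
    · obtain ⟨j, hj, h⟩ := ih ha
      exact ⟨j, by omega, h⟩
    · exact ⟨m, by omega, b, hb, rfl⟩

lemma pos_of_mem_range' (k : ℕ) : ∀ a ∈ List.range' 1 k, 0 < a :=
  fun _ ha => (List.mem_range'_1.1 ha).1

/-- Values are `1`-based, so block `j` of width `M` is the window `(j * M, (j + 1) * M]`. -/
def block (M a : ℕ) : ℕ := (a - 1) / M

lemma block_mono {M a b : ℕ} (h : a ≤ b) : block M a ≤ block M b :=
  Nat.div_le_div_right (by omega)

lemma block_add_mul {M b : ℕ} (hb : 0 < b) (hM : 0 < M) (j : ℕ) :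
    block M (b + j * M) = block M b + j := by
  rw [block, block, show b + j * M - 1 = b - 1 + j * M by omega, Nat.add_mul_div_right _ _ hM]

lemma block_mul (M N a : ℕ) : block (M * N) a = block M a / N :=
  (Nat.div_div_eq_div_mul _ _ _).symm

lemma block_add_of_dvd {M b c : ℕ} (hb : 0 < b) (hM : 0 < M) (hc : M ∣ c) :
    block M (b + c) = block M b + c / M := by
  rw [← block_add_mul hb hM, Nat.div_mul_cancel hc]

lemma exists_forall_eq_of_pairwise {α : Type*} {f : α → ℕ} {u : List α}
    (h : u.Pairwise (fun a b => f a = f b)) : ∃ j, ∀ a ∈ u, f a = j := by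
  rcases u with _ | ⟨a, t⟩
  · exact ⟨0, by simp⟩
  · rw [List.pairwise_cons] at h
    exact ⟨f a, by simpa using fun b hb => (h.1 b hb).symm⟩

lemma length_le_card_of_pairwise_ne {α : Type*} {f : α → ℕ} {u : List α} {S : Finset ℕ}
    (h : u.Pairwise (fun a b => f a ≠ f b)) (hS : ∀ a ∈ u, f a ∈ S) : u.length ≤ S.card := by
  have hnd : (u.map f).Nodup := List.pairwise_map.2 h
  rw [← List.length_map f, ← List.toFinset_card_of_nodup hnd]
  exact Finset.card_le_card fun b hb => by
    obtain ⟨a, ha, rfl⟩ := List.mem_map.1 (List.mem_toFinset.1 hb)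
    exact hS a ha

section Powers

variable {x : List ℕ}

lemma block_add_mul_of_mem (hx : ∀ b ∈ x, 0 < b) {b : ℕ} (hb : b ∈ x) (j : ℕ) :
    block (maxVal x) (b + j * maxVal x) = j := by
  have hb₀ := hx b hb
  have hbM := le_maxVal hb
  rw [block_add_mul hb₀ (by omega), block, Nat.div_eq_of_lt (by omega), zero_add]

lemma block_of_mem_map (hx : ∀ b ∈ x, 0 < b) {j a : ℕ}
    (ha : a ∈ x.map (· + j * maxVal x)) :
    block (maxVal x) a = j := by
  obtain ⟨b, hb, rfl⟩ := List.mem_map.1 ha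
  exact block_add_mul_of_mem hx hb j

lemma pos_and_block_lt_of_eq_add_mul (hx : ∀ b ∈ x, 0 < b) {m a : ℕ}
    (ha : ∃ j < m, ∃ b ∈ x, a = b + j * maxVal x) :
    0 < a ∧ block (maxVal x) a < m := by
  obtain ⟨j, hj, b, hb, rfl⟩ := ha
  have := hx b hb
  exact ⟨by omega, by rwa [block_add_mul_of_mem hx hb]⟩

lemma pos_of_mem_skewPow (hx : ∀ b ∈ x, 0 < b) {m : ℕ} :
    ∀ a ∈ skewPow x m, 0 < a :=
  fun _ ha => (pos_and_block_lt_of_eq_add_mul hx (mem_skewPow ha)).1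

lemma filter_block_map_add (hx : ∀ b ∈ x, 0 < b) (j m : ℕ) :
    (x.map (· + m * maxVal x)).filter (block (maxVal x) · = j) =
      if m = j then x.map (· + m * maxVal x) else [] := by
  split_ifs with hmj
  · exact List.filter_eq_self.2 fun a ha => by simp [block_of_mem_map hx ha, hmj]
  · exact List.filter_eq_nil_iff.2 fun a ha => by simp [block_of_mem_map hx ha, hmj]

lemma filter_block_skewPow (hx : ∀ b ∈ x, 0 < b) (j m : ℕ) :
    (skewPow x m).filter (block (maxVal x) · = j) =
      if j < m then x.map (· + j * maxVal x) else [] := by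
  induction m with
  | zero => simp [skewPow]
  | succ m ih =>
    rw [skewPow_succ', List.filter_append, ih, filter_block_map_add hx]
    rcases lt_trichotomy j m with h | rfl | h
    · simp [h, h.ne', Nat.lt_succ_of_lt h]
    · simp
    · simp [h.ne, show ¬j < m by omega, show ¬j < m + 1 by omega]

lemma filter_block_dirPow (hx : ∀ b ∈ x, 0 < b) (j m : ℕ) :
    (dirPow x m).filter (block (maxVal x) · = j) =
      if j < m then x.map (· + j * maxVal x) else [] := by
  induction m with
  | zero => simp [dirPow]
  | succ m ih =>
    rw [dirPow_succ', List.filter_append, ih, filter_block_map_add hx]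
    rcases lt_trichotomy j m with h | rfl | h
    · simp [h, h.ne', Nat.lt_succ_of_lt h]
    · simp
    · simp [h.ne, show ¬j < m by omega, show ¬j < m + 1 by omega]

lemma sublist_map_of_sublist_skewPow (hx : ∀ b ∈ x, 0 < b) {u : List ℕ} {j m : ℕ}
    (hu : u <+ skewPow x m) (hj : ∀ a ∈ u, block (maxVal x) a = j) :
    u <+ x.map (· + j * maxVal x) := by
  have h := hu.filter (block (maxVal x) · = j)
  rw [List.filter_eq_self.2 (by simpa using hj), filter_block_skewPow hx] at h
  split_ifs at h
  · exact h
  · exact List.sublist_nil.1 h ▸ List.nil_sublist _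

lemma sublist_map_of_sublist_dirPow (hx : ∀ b ∈ x, 0 < b) {u : List ℕ} {j m : ℕ}
    (hu : u <+ dirPow x m) (hj : ∀ a ∈ u, block (maxVal x) a = j) :
    u <+ x.map (· + j * maxVal x) := by
  have h := hu.filter (block (maxVal x) · = j)
  rw [List.filter_eq_self.2 (by simpa using hj), filter_block_dirPow hx] at h
  split_ifs at h
  · exact h
  · exact List.sublist_nil.1 h ▸ List.nil_sublist _

lemma pairwise_block_skewPow (hx : ∀ b ∈ x, 0 < b) (m : ℕ) :
    (skewPow x m).Pairwise (fun a b => block (maxVal x) b ≤ block (maxVal x) a) := by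
  induction m with
  | zero => simp [skewPow]
  | succ m ih =>
    rw [skewPow_succ', List.pairwise_append]
    refine ⟨List.pairwise_of_forall_mem_list fun a ha b hb => ?_, ih, fun a ha b hb => ?_⟩
    · rw [block_of_mem_map hx ha, block_of_mem_map hx hb]
    · rw [block_of_mem_map hx ha]
      exact (pos_and_block_lt_of_eq_add_mul hx (mem_skewPow hb)).2.le

lemma pairwise_block_dirPow (hx : ∀ b ∈ x, 0 < b) (m : ℕ) :
    (dirPow x m).Pairwise (fun a b => block (maxVal x) a ≤ block (maxVal x) b) := by
  induction m with
  | zero => simp [dirPow]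
  | succ m ih =>
    rw [dirPow_succ', List.pairwise_append]
    refine ⟨ih, List.pairwise_of_forall_mem_list fun a ha b hb => ?_, fun a ha b hb => ?_⟩
    · rw [block_of_mem_map hx ha, block_of_mem_map hx hb]
    · rw [block_of_mem_map hx hb]
      exact (pos_and_block_lt_of_eq_add_mul hx (mem_dirPow ha)).2.le

lemma nodup_skewPow (hx : ∀ b ∈ x, 0 < b) (hnd : x.Nodup) (m : ℕ) : (skewPow x m).Nodup := by
  induction m with
  | zero => simp [skewPow]
  | succ m ih =>
    rw [skewPow_succ', List.nodup_append]
    refine ⟨hnd.map (add_left_injective _), ih, fun a ha b hb hab => ?_⟩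
    have := (pos_and_block_lt_of_eq_add_mul hx (mem_skewPow hb)).2
    rw [← hab, block_of_mem_map hx ha] at this
    exact lt_irrefl m this

lemma nodup_dirPow (hx : ∀ b ∈ x, 0 < b) (hnd : x.Nodup) (m : ℕ) : (dirPow x m).Nodup := by
  induction m with
  | zero => simp [dirPow]
  | succ m ih =>
    rw [dirPow_succ', List.nodup_append]
    refine ⟨ih, hnd.map (add_left_injective _), fun a ha b hb hab => ?_⟩
    have := (pos_and_block_lt_of_eq_add_mul hx (mem_dirPow ha)).2
    rw [hab, block_of_mem_map hx hb] at this
    exact lt_irrefl m this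

lemma exists_block_eq_of_sublist_skewPow (hx : ∀ b ∈ x, 0 < b) {u : List ℕ} {m : ℕ}
    (hu : u <+ skewPow x m) (hinc : u.Pairwise (· < ·)) :
    ∃ j, ∀ a ∈ u, block (maxVal x) a = j :=
  exists_forall_eq_of_pairwise <| (((pairwise_block_skewPow hx m).sublist hu).and hinc).imp
    fun h => le_antisymm (block_mono h.2.le) h.1

lemma exists_block_eq_of_sublist_dirPow (hx : ∀ b ∈ x, 0 < b) {u : List ℕ} {m : ℕ}
    (hu : u <+ dirPow x m) (hdec : u.Pairwise (· > ·)) :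
    ∃ j, ∀ a ∈ u, block (maxVal x) a = j :=
  exists_forall_eq_of_pairwise <| (((pairwise_block_dirPow hx m).sublist hu).and hdec).imp
    fun h => le_antisymm h.1 (block_mono h.2.le)

/-- Two entries of a decreasing subword sharing a block would lie in one copy of `x`. -/
lemma pairwise_block_ne_of_sublist_skewPow (hx : ∀ b ∈ x, 0 < b) (hxinc : x.Pairwise (· < ·))
    {u : List ℕ} {m : ℕ} (hu : u <+ skewPow x m) (hdec : u.Pairwise (· > ·)) :
    u.Pairwise (fun a b => block (maxVal x) a ≠ block (maxVal x) b) := by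
  rw [List.pairwise_iff_forall_sublist] at hdec ⊢
  intro a b hab hblock
  have hsub := sublist_map_of_sublist_skewPow hx (hab.trans hu) (j := block (maxVal x) a)
    (by simp [hblock])
  have hinc : (x.map (· + block (maxVal x) a * maxVal x)).Pairwise (· < ·) :=
    List.pairwise_map.2 (hxinc.imp fun h => by omega)
  exact absurd (hdec hab) (List.pairwise_pair.1 (hinc.sublist hsub)).asymm

lemma exists_block_eq_of_sublist_map_skewPow (hx : ∀ b ∈ x, 0 < b) {m c : ℕ}
    (hc : maxVal x ∣ c) {u : List ℕ} (hu : u <+ (skewPow x m).map (· + c))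
    (hinc : u.Pairwise (· < ·)) : ∃ j, ∀ a ∈ u, block (maxVal x) a = j := by
  obtain ⟨t, ht, rfl⟩ := List.sublist_map_iff.1 hu
  obtain ⟨j, hj⟩ := exists_block_eq_of_sublist_skewPow hx ht
    (List.pairwise_map.1 hinc |>.imp fun h => by omega)
  refine ⟨j + c / maxVal x, fun a ha => ?_⟩
  obtain ⟨b, hb, rfl⟩ := List.mem_map.1 ha
  have hb₀ := pos_of_mem_skewPow hx b (ht.subset hb)
  obtain ⟨-, -, b', hb', -⟩ := mem_skewPow (ht.subset hb)
  rw [block_add_of_dvd hb₀ ((hx b' hb').trans_le (le_maxVal hb')) hc, hj b hb]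

end Powers

def rank (u : List ℕ) (a : ℕ) : ℕ := (u.toFinset.filter (· < a)).card

lemma stdz_eq_map_rank (u : List ℕ) : stdz u = u.map (rank u) := by
  unfold stdz rank
  congr 1
  funext a
  rw [← List.card_toFinset, List.toFinset_filter]
  simp

lemma rank_strictMonoOn (u : List ℕ) : StrictMonoOn (rank u) {a | a ∈ u} := by
  intro a ha b _ hab
  refine Finset.card_lt_card ⟨fun c hc => ?_, fun hsub => ?_⟩
  · simp only [Finset.mem_filter] at hc ⊢
    exact ⟨hc.1, hc.2.trans hab⟩
  · have := hsub (Finset.mem_filter.2 ⟨List.mem_toFinset.2 ha, hab⟩)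
    simp at this

lemma eq_of_map_eq_of_injOn {α β : Type*} {f : α → β} {s : Set α} (hf : s.InjOn f) :
    ∀ {l₁ l₂ : List α}, (∀ a ∈ l₁, a ∈ s) → (∀ a ∈ l₂, a ∈ s) → l₁.map f = l₂.map f → l₁ = l₂
  | [], [], _, _, _ => rfl
  | a :: l₁, b :: l₂, h₁, h₂, h => by
    simp only [List.map_cons, List.cons.injEq] at h
    rw [hf (h₁ a (by simp)) (h₂ b (by simp)) h.1, eq_of_map_eq_of_injOn hf
      (fun c hc => h₁ c (by simp [hc])) (fun c hc => h₂ c (by simp [hc])) h.2]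

lemma pairwise_lt_of_map_eq_range {f : ℕ → ℕ} {s : Set ℕ} (hf : StrictMonoOn f s) {l : List ℕ}
    (hl : ∀ a ∈ l, a ∈ s) {k : ℕ} (h : l.map f = List.range k) : l.Pairwise (· < ·) := by
  have := List.pairwise_lt_range (n := k)
  rw [← h, List.pairwise_map] at this
  exact this.imp_of_mem fun ha hb hab => (hf.lt_iff_lt (hl _ ha) (hl _ hb)).1 hab

lemma sublist_of_append_sublist_append {α : Type*} {w₁ w₂ W₁ W₂ : List α}
    (h : w₁ ++ w₂ <+ W₁ ++ W₂) (h₁ : W₁.Nodup) (h₂ : W₂.Nodup) (hmem : ∀ a, a ∈ w₁ ↔ a ∈ w₂) :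
    w₁ <+ W₁ ∧ w₂ <+ W₂ := by
  obtain ⟨v₁, v₂, hv, hv₁, hv₂⟩ := List.sublist_append_iff.1 h
  rcases List.append_eq_append_iff.1 hv with ⟨t, rfl, rfl⟩ | ⟨t, rfl, rfl⟩
  · obtain rfl : t = [] := List.eq_nil_iff_forall_not_mem.2 fun c hc =>
      (List.nodup_append.1 (h₁.sublist hv₁)).2.2 c ((hmem c).2 (by simp [hc])) c hc rfl
    exact ⟨by simpa using hv₁, by simpa using hv₂⟩
  · obtain rfl : t = [] := List.eq_nil_iff_forall_not_mem.2 fun c hc =>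
      (List.nodup_append.1 (h₂.sublist hv₂)).2.2 c hc c ((hmem c).1 (by simp [hc])) rfl
    exact ⟨by simpa using hv₁, by simpa using hv₂⟩

section IdOrReverse

variable {e : List ℕ → List ℕ}

lemma apply_apply_of_mem_idReverse (he : e ∈ ({id, List.reverse} : Set (List ℕ → List ℕ)))
    (l : List ℕ) : e (e l) = l := by
  rcases he with rfl | rfl <;> simp

lemma map_apply_of_mem_idReverse (he : e ∈ ({id, List.reverse} : Set (List ℕ → List ℕ)))
    (f : ℕ → ℕ) (l : List ℕ) : (e l).map f = e (l.map f) := by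
  rcases he with rfl | rfl <;> simp

lemma mem_apply_of_mem_idReverse (he : e ∈ ({id, List.reverse} : Set (List ℕ → List ℕ)))
    {a : ℕ} {l : List ℕ} : a ∈ e l ↔ a ∈ l := by
  rcases he with rfl | rfl <;> simp

lemma length_apply_of_mem_idReverse (he : e ∈ ({id, List.reverse} : Set (List ℕ → List ℕ)))
    (l : List ℕ) : (e l).length = l.length := by
  rcases he with rfl | rfl <;> simp

end IdOrReverse

lemma exists_sublists_of_contains {W₁ W₂ : List ℕ} (hW₁ : W₁.Nodup) (hW₂ : W₂.Nodup)
    {e₁ e₂ : List ℕ → List ℕ} (he₁ : e₁ ∈ ({id, List.reverse} : Set (List ℕ → List ℕ)))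
    (he₂ : e₂ ∈ ({id, List.reverse} : Set (List ℕ → List ℕ))) {k : ℕ}
    (hc : Contains (W₁ ++ W₂) (e₁ (List.range k) ++ e₂ (List.range k))) :
    ∃ s : List ℕ, s.length = k ∧ s.Pairwise (· < ·) ∧ e₁ s <+ W₁ ∧ e₂ s <+ W₂ := by
  obtain ⟨u, hu, hstd⟩ := hc
  rw [stdz_eq_map_rank] at hstd
  have hlen : (e₁ (List.range k)).length = k := by simp [length_apply_of_mem_idReverse he₁]
  have hw₁ : (u.take k).map (rank u) = e₁ (List.range k) := by
    rw [List.map_take, hstd, List.take_left' hlen]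
  have hw₂ : (u.drop k).map (rank u) = e₂ (List.range k) := by
    rw [List.map_drop, hstd, List.drop_left' hlen]
  set s := e₁ (u.take k)
  have hs : s.map (rank u) = List.range k := by
    rw [map_apply_of_mem_idReverse he₁, hw₁, apply_apply_of_mem_idReverse he₁]
  have hs₂ : (e₂ (u.drop k)).map (rank u) = List.range k := by
    rw [map_apply_of_mem_idReverse he₂, hw₂, apply_apply_of_mem_idReverse he₂]
  have hsu : ∀ a ∈ s, a ∈ u := fun a ha =>
    (List.take_sublist k u).subset ((mem_apply_of_mem_idReverse he₁).1 ha)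
  have hw₁s : u.take k = e₁ s := (apply_apply_of_mem_idReverse he₁ _).symm
  have hw₂s : u.drop k = e₂ s := by
    rw [← eq_of_map_eq_of_injOn (rank_strictMonoOn u).injOn
      (fun a ha => (List.drop_sublist k u).subset ((mem_apply_of_mem_idReverse he₂).1 ha)) hsu
      (hs₂.trans hs.symm), apply_apply_of_mem_idReverse he₂]
  obtain ⟨h₁, h₂⟩ := sublist_of_append_sublist_append ((u.take_append_drop k).symm ▸ hu) hW₁ hW₂
    fun a => by rw [hw₁s, hw₂s, mem_apply_of_mem_idReverse he₁, mem_apply_of_mem_idReverse he₂]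
  exact ⟨s, by simpa using congrArg List.length hs,
    pairwise_lt_of_map_eq_range (rank_strictMonoOn u) hsu hs, hw₁s ▸ h₁, hw₂s ▸ h₂⟩

section Construction

variable {n : ℕ} {s : List ℕ}

lemma maxVal_skewPow_range' (n : ℕ) : maxVal (skewPow (List.range' 1 n) n) = n ^ 2 := by
  rw [maxVal_skewPow, maxVal_range'_one, sq]

lemma maxVal_skewPow_skewPow_range' (n : ℕ) :
    maxVal (skewPow (skewPow (List.range' 1 n) n) n) = n ^ 3 := by
  rw [maxVal_skewPow, maxVal_skewPow_range']
  ring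

lemma pos_of_mem_skewPow_range' : ∀ a ∈ skewPow (List.range' 1 n) n, 0 < a :=
  pos_of_mem_skewPow (pos_of_mem_range' n)

lemma pos_of_mem_skewPow_skewPow_range' : ∀ a ∈ skewPow (skewPow (List.range' 1 n) n) n, 0 < a :=
  pos_of_mem_skewPow pos_of_mem_skewPow_range'

lemma nodup_dirPow_skewPow_skewPow_range' (n : ℕ) :
    (dirPow (skewPow (skewPow (List.range' 1 n) n) n) n).Nodup :=
  nodup_dirPow pos_of_mem_skewPow_skewPow_range' (nodup_skewPow pos_of_mem_skewPow_range'
    (nodup_skewPow (pos_of_mem_range' n) List.nodup_range' n) n) n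

lemma sublist_map_of_sublist_dirPow_of_block_eq (hn : 0 < n) {u : List ℕ} {k : ℕ}
    (hu : u <+ dirPow (skewPow (skewPow (List.range' 1 n) n) n) n)
    (hk : ∀ a ∈ u, block (n ^ 2) a = k) :
    u <+ (skewPow (List.range' 1 n) n).map (· + k * n ^ 2) := by
  have hC : ∀ a ∈ u, block (maxVal (skewPow (skewPow (List.range' 1 n) n) n)) a = k / n :=
    fun a ha => by rw [maxVal_skewPow_skewPow_range', pow_succ, block_mul, hk a ha]
  obtain ⟨t, ht, rfl⟩ :=
    List.sublist_map_iff.1 (sublist_map_of_sublist_dirPow pos_of_mem_skewPow_skewPow_range' hu hC)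
  have ht' : ∀ b ∈ t, block (maxVal (skewPow (List.range' 1 n) n)) b = k % n := by
    intro b hb
    have h := hk _ (List.mem_map_of_mem hb)
    rw [maxVal_skewPow_skewPow_range', show k / n * n ^ 3 = k / n * n * n ^ 2 by ring,
      block_add_mul (pos_of_mem_skewPow_skewPow_range' b (ht.subset hb)) (by positivity)] at h
    have := Nat.div_add_mod' k n
    rw [maxVal_skewPow_range']
    omega
  have := (sublist_map_of_sublist_skewPow pos_of_mem_skewPow_range' ht ht').map
    (· + k / n * maxVal (skewPow (skewPow (List.range' 1 n) n) n))
  rw [List.map_map] at this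
  convert this using 2
  funext b
  simp only [Function.comp_apply, maxVal_skewPow_range', maxVal_skewPow_skewPow_range']
  nth_rewrite 1 [← Nat.mod_add_div k n]
  ring

lemma pairwise_block_ne_of_reverse_sublist_skewPow_range' (hinc : s.Pairwise (· < ·))
    (hA : s.reverse <+ skewPow (List.range' 1 (n ^ 2)) (n ^ 2)) :
    s.Pairwise (fun a b => block (n ^ 2) a ≠ block (n ^ 2) b) := by
  have := pairwise_block_ne_of_sublist_skewPow (pos_of_mem_range' _) List.pairwise_lt_range' hA
    (List.pairwise_reverse.2 hinc)
  rw [maxVal_range'_one, List.pairwise_reverse] at this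
  exact this.imp Ne.symm

lemma length_le_of_sublist_skewPow_of_sublist_dirPow (hn : 0 < n) (hinc : s.Pairwise (· < ·))
    (hA : s <+ skewPow (List.range' 1 (n ^ 2)) (n ^ 2))
    (hB : s <+ dirPow (skewPow (skewPow (List.range' 1 n) n) n) n) : s.length ≤ n := by
  obtain ⟨k, hk⟩ := exists_block_eq_of_sublist_skewPow (pos_of_mem_range' _) hA hinc
  rw [maxVal_range'_one] at hk
  obtain ⟨t, ht, rfl⟩ := List.sublist_map_iff.1 (sublist_map_of_sublist_dirPow_of_block_eq hn hB hk)
  obtain ⟨j, hj⟩ := exists_block_eq_of_sublist_skewPow (pos_of_mem_range' n) ht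
    (List.pairwise_map.1 hinc |>.imp fun h => by omega)
  simpa using (sublist_map_of_sublist_skewPow (pos_of_mem_range' n) ht hj).length_le

lemma length_le_of_sublist_skewPow_of_reverse_sublist_dirPow (hn : 0 < n)
    (hinc : s.Pairwise (· < ·)) (hA : s <+ skewPow (List.range' 1 (n ^ 2)) (n ^ 2))
    (hB : s.reverse <+ dirPow (skewPow (skewPow (List.range' 1 n) n) n) n) : s.length ≤ n := by
  obtain ⟨k, hk⟩ := exists_block_eq_of_sublist_skewPow (pos_of_mem_range' _) hA hinc
  rw [maxVal_range'_one] at hk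
  obtain ⟨t, ht, hst⟩ := List.sublist_map_iff.1
    (sublist_map_of_sublist_dirPow_of_block_eq hn hB fun a ha => hk a (List.mem_reverse.1 ha))
  have hdec : t.Pairwise (· > ·) := by
    have := List.pairwise_reverse.2 hinc
    rw [hst, List.pairwise_map] at this
    exact this.imp fun h => by omega
  have hne := pairwise_block_ne_of_sublist_skewPow (pos_of_mem_range' n) List.pairwise_lt_range'
    ht hdec
  have := length_le_card_of_pairwise_ne hne (S := Finset.range n) fun a ha => by
    simpa [maxVal_range'_one] using
      (pos_and_block_lt_of_eq_add_mul (pos_of_mem_range' n) (mem_skewPow (ht.subset ha))).2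
  simpa [← List.length_reverse (as := s), hst] using this

lemma length_le_of_reverse_sublist_skewPow_of_sublist_dirPow (hinc : s.Pairwise (· < ·))
    (hA : s.reverse <+ skewPow (List.range' 1 (n ^ 2)) (n ^ 2))
    (hB : s <+ dirPow (skewPow (skewPow (List.range' 1 n) n) n) n) : s.length ≤ n := by
  have hA' := pairwise_block_ne_of_reverse_sublist_skewPow_range' hinc hA
  have hne : s.Pairwise (fun a b => block (n ^ 3) a ≠ block (n ^ 3) b) := by
    rw [List.pairwise_iff_forall_sublist] at hA' hinc ⊢
    intro a b hab hblock
    have hsub := sublist_map_of_sublist_dirPow pos_of_mem_skewPow_skewPow_range' (hab.trans hB)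
      (j := block (n ^ 3) a) (by simp [maxVal_skewPow_skewPow_range', hblock])
    obtain ⟨j, hj⟩ := exists_block_eq_of_sublist_map_skewPow pos_of_mem_skewPow_range'
      (by rw [maxVal_skewPow_range', maxVal_skewPow_skewPow_range']
          exact Dvd.dvd.mul_left (pow_dvd_pow n (by norm_num)) _)
      hsub (List.pairwise_pair.2 (hinc hab))
    rw [maxVal_skewPow_range'] at hj
    exact hA' hab ((hj a (by simp)).trans (hj b (by simp)).symm)
  refine (length_le_card_of_pairwise_ne hne (S := Finset.range n) fun a ha => ?_).trans (by simp)
  simpa [maxVal_skewPow_skewPow_range'] using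
    (pos_and_block_lt_of_eq_add_mul pos_of_mem_skewPow_skewPow_range' (mem_dirPow (hB.subset ha))).2

lemma length_le_of_reverse_sublist_skewPow_of_reverse_sublist_dirPow (hn : 0 < n)
    (hinc : s.Pairwise (· < ·)) (hA : s.reverse <+ skewPow (List.range' 1 (n ^ 2)) (n ^ 2))
    (hB : s.reverse <+ dirPow (skewPow (skewPow (List.range' 1 n) n) n) n) : s.length ≤ n := by
  obtain ⟨c, hc⟩ := exists_block_eq_of_sublist_dirPow pos_of_mem_skewPow_skewPow_range' hB
    (List.pairwise_reverse.2 hinc)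
  refine (length_le_card_of_pairwise_ne
    (pairwise_block_ne_of_reverse_sublist_skewPow_range' hinc hA)
    (S := Finset.Ico (c * n) (c * n + n)) fun a ha => ?_).trans (by simp)
  have h := hc a (List.mem_reverse.2 ha)
  rw [maxVal_skewPow_skewPow_range', pow_succ, block_mul] at h
  rw [Finset.mem_Ico, ← h]
  exact ⟨Nat.div_mul_le_self _ _, Nat.lt_div_mul_add hn⟩

end Construction

theorem stmt_9 (n : ℕ) :
    ∀ e₁ ∈ ({id, List.reverse} : Set (List ℕ → List ℕ)),
      ∀ e₂ ∈ ({id, List.reverse} : Set (List ℕ → List ℕ)),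
        ¬ Contains (skewPow (List.range' 1 (n ^ 2)) (n ^ 2) ++
            dirPow (skewPow (skewPow (dirPow [1] n) n) n) n)
          (e₁ (List.range (n + 1)) ++ e₂ (List.range (n + 1))) := by
  intro e₁ he₁ e₂ he₂ hc
  rw [dirPow_singleton_one] at hc
  obtain ⟨s, hlen, hinc, hA, hB⟩ := exists_sublists_of_contains
    (nodup_skewPow (pos_of_mem_range' _) List.nodup_range' _)
    (nodup_dirPow_skewPow_skewPow_range' n) he₁ he₂ hc
  rcases n.eq_zero_or_pos with rfl | hn
  · simpa [skewPow, length_apply_of_mem_idReverse he₁, hlen] using hA.length_le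
  suffices s.length ≤ n by omega
  rcases he₁ with rfl | rfl <;> rcases he₂ with rfl | rfl
  · exact length_le_of_sublist_skewPow_of_sublist_dirPow hn hinc hA hB
  · exact length_le_of_sublist_skewPow_of_reverse_sublist_dirPow hn hinc hA hB
  · exact length_le_of_reverse_sublist_skewPow_of_sublist_dirPow hinc hA hB
  · exact length_le_of_reverse_sublist_skewPow_of_reverse_sublist_dirPow hn hinc hA hB
end

section
/- There exists a word with n^6 repeats that contains none of the following patterns: 000; 0011...nn; nn...1100; and (01...n)^{e1}(01...n)^{e2} for e1,e2 ∈ {id, rev}. -/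
/-!
In coordinates, the witness `s` has as letters the numbers `v < n ^ 6`, read as six base-`n`
digits, and every letter occurs exactly twice; this gives `n ^ 6` repeats and excludes `000`.
Each remaining pattern uses every letter `0, …, n` twice, and any two consecutive letters `a < b`
of it occur in one fixed order: `aabb`, `bbaa`, `abab`, `abba`, `baab` or `baba`. In `s`, each of
these orders forces one particular digit of the larger letter above that of the smaller, so an
occurrence of the pattern would produce `n + 1` strictly increasing digits below `n`.
-/

theorem mul_add_lt_mul_add_iff_of_lt {m a b a' b' : ℕ} (hb : b < m) (hb' : b' < m) :
    a * m + b < a' * m + b' ↔ a < a' ∨ a = a' ∧ b < b' := by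
  constructor
  · intro h
    rcases lt_trichotomy a a' with h' | rfl | h'
    · exact .inl h'
    · exact .inr ⟨rfl, by omega⟩
    · nlinarith
  · rintro (h | ⟨rfl, h⟩)
    · nlinarith
    · omega

theorem mul_add_div_of_lt {m a b : ℕ} (hb : b < m) : (a * m + b) / m = a := by
  rw [Nat.add_comm, Nat.add_mul_div_right _ _ (by omega), Nat.div_eq_of_lt hb, Nat.zero_add]

theorem mul_add_mod_of_lt {m a b : ℕ} (hb : b < m) : (a * m + b) % m = b := by
  rw [Nat.add_comm, Nat.add_mul_mod_self_right, Nat.mod_eq_of_lt hb]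

theorem mul_add_eq_mul_add_iff_of_lt {m a b a' b' : ℕ} (hb : b < m) (hb' : b' < m) :
    a * m + b = a' * m + b' ↔ a = a' ∧ b = b' := by
  refine ⟨fun h => ⟨?_, ?_⟩, fun ⟨ha, hb⟩ => ha ▸ hb ▸ rfl⟩
  · rw [← mul_add_div_of_lt (a := a) hb, h, mul_add_div_of_lt hb']
  · rw [← mul_add_mod_of_lt (a := a) hb, h, mul_add_mod_of_lt hb']

theorem le_of_forall_lt_succ {f : ℕ → ℕ} {n : ℕ} (hf : ∀ k < n, f k < f (k + 1)) :
    n ≤ f n := by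
  induction n with
  | zero => exact Nat.zero_le _
  | succ m ih => exact (ih fun k hk => hf k (by omega)).trans_lt (hf m (by omega))

theorem strictMonoOn_length_dedup_filter_lt {α : Type*} [LinearOrder α] (u : List α) :
    StrictMonoOn (fun x => ((u.filter (· < x)).dedup).length) {x | x ∈ u} := by
  intro x hx y _ hxy
  simp only [← List.card_toFinset]
  refine Finset.card_lt_card (Finset.ssubset_iff_of_subset ?_ |>.mpr ⟨x, ?_, ?_⟩)
  · intro z hz
    simp only [List.mem_toFinset, List.mem_filter, decide_eq_true_eq] at hz ⊢
    exact ⟨hz.1, hz.2.trans hxy⟩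
  · simpa using ⟨hx, hxy⟩
  · simp

theorem Contains.exists_orderEmbedding {w p : List ℕ} (h : Contains w p) :
    ∃ σ : ℕ ↪o ℕ, ∀ i j x y, p[i]? = some x → p[j]? = some y →
      ∃ a b, w[σ i]? = some a ∧ w[σ j]? = some b ∧ cmp a b = cmp x y := by
  obtain ⟨u, hu, rfl⟩ := h
  obtain ⟨σ, hσ⟩ := List.sublist_iff_exists_orderEmbedding_getElem?_eq.mp hu
  refine ⟨σ, fun i j x y hx hy => ?_⟩
  simp only [stdz, List.getElem?_map, Option.map_eq_some_iff] at hx hy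
  obtain ⟨a, ha, rfl⟩ := hx
  obtain ⟨b, hb, rfl⟩ := hy
  refine ⟨a, b, hσ i ▸ ha, hσ j ▸ hb, ?_⟩
  exact ((strictMonoOn_length_dedup_filter_lt u).cmp_map_eq
    (List.mem_of_getElem? ha) (List.mem_of_getElem? hb)).symm

namespace PatternWord

def digit (n v k : ℕ) : ℕ := v / n ^ k % n

theorem digit_zero (n v : ℕ) : digit n v 0 = v % n := by simp [digit]

theorem digit_succ (n v k : ℕ) : digit n v (k + 1) = digit n (v / n) k := by
  simp [digit, pow_succ', Nat.div_div_eq_div_mul]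

theorem digit_lt {n : ℕ} (hn : 0 < n) (v k : ℕ) : digit n v k < n := Nat.mod_lt _ hn

theorem digits_lt {n : ℕ} (hn : 0 < n) (v : ℕ) :
    digit n v 5 < n ∧ digit n v 4 < n ∧ digit n v 3 < n ∧ digit n v 2 < n ∧ digit n v 1 < n ∧
      digit n v 0 < n := by
  simp only [digit_lt hn, and_self]

def val6 (n a₁ a₂ a₃ a₄ a₅ a₆ : ℕ) : ℕ :=
  ((((a₁ * n + a₂) * n + a₃) * n + a₄) * n + a₅) * n + a₆

def pos7 (n t s h c₁ c₂ c₃ c₄ : ℕ) : ℕ :=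
  (((((t * n + s) * 2 + h) * n + c₁) * n + c₂) * n + c₃) * n + c₄

theorem val6_digit {n v : ℕ} (hv : v < n ^ 6) :
    val6 n (digit n v 5) (digit n v 4) (digit n v 3) (digit n v 2) (digit n v 1) (digit n v 0) =
      v := by
  have htop : v / n / n / n / n / n % n = v / n / n / n / n / n := by
    refine Nat.mod_eq_of_lt ?_
    simp only [Nat.div_div_eq_div_mul]
    exact Nat.div_lt_of_lt_mul (by ring_nf; exact hv)
  simp only [val6, digit_succ, digit_zero, htop, Nat.div_add_mod']

theorem digit_val6 {n a₁ a₂ a₃ a₄ a₅ a₆ : ℕ} (h₁ : a₁ < n) (h₂ : a₂ < n) (h₃ : a₃ < n)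
    (h₄ : a₄ < n) (h₅ : a₅ < n) (h₆ : a₆ < n) :
    digit n (val6 n a₁ a₂ a₃ a₄ a₅ a₆) 5 = a₁ ∧ digit n (val6 n a₁ a₂ a₃ a₄ a₅ a₆) 4 = a₂ ∧
      digit n (val6 n a₁ a₂ a₃ a₄ a₅ a₆) 3 = a₃ ∧ digit n (val6 n a₁ a₂ a₃ a₄ a₅ a₆) 2 = a₄ ∧
      digit n (val6 n a₁ a₂ a₃ a₄ a₅ a₆) 1 = a₅ ∧ digit n (val6 n a₁ a₂ a₃ a₄ a₅ a₆) 0 = a₆ := by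
  simp (disch := assumption) only [val6, digit_succ, digit_zero, mul_add_div_of_lt,
    mul_add_mod_of_lt, Nat.mod_eq_of_lt h₁, and_self]

theorem val6_lt {n a₁ a₂ a₃ a₄ a₅ a₆ : ℕ} (h₁ : a₁ < n) (h₂ : a₂ < n) (h₃ : a₃ < n)
    (h₄ : a₄ < n) (h₅ : a₅ < n) (h₆ : a₆ < n) : val6 n a₁ a₂ a₃ a₄ a₅ a₆ < n ^ 6 := by
  have hpow : val6 n n 0 0 0 0 0 = n ^ 6 := by simp only [val6]; ring
  rw [← hpow]
  simp (disch := omega) only [val6, mul_add_lt_mul_add_iff_of_lt,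
    mul_add_eq_mul_add_iff_of_lt]
  omega

theorem pos7_lt {n t s h c₁ c₂ c₃ c₄ : ℕ} (ht : t < n) (hs : s < n) (hh : h < 2)
    (h₁ : c₁ < n) (h₂ : c₂ < n) (h₃ : c₃ < n) (h₄ : c₄ < n) :
    pos7 n t s h c₁ c₂ c₃ c₄ < 2 * n ^ 6 := by
  have hpow : pos7 n n 0 0 0 0 0 0 = 2 * n ^ 6 := by simp only [pos7]; ring
  rw [← hpow]
  simp (disch := omega) only [pos7, mul_add_lt_mul_add_iff_of_lt,
    mul_add_eq_mul_add_iff_of_lt]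
  omega

theorem exists_pos7 {n i : ℕ} (hi : i < 2 * n ^ 6) :
    ∃ t s h c₁ c₂ c₃ c₄, t < n ∧ s < n ∧ h < 2 ∧ c₁ < n ∧ c₂ < n ∧ c₃ < n ∧ c₄ < n ∧
      pos7 n t s h c₁ c₂ c₃ c₄ = i := by
  have hn : 0 < n := Nat.pos_of_ne_zero (by rintro rfl; simp at hi)
  refine ⟨i / n / n / n / n / 2 / n, i / n / n / n / n / 2 % n, i / n / n / n / n % 2,
    i / n / n / n % n, i / n / n % n, i / n % n, i % n, ?_, Nat.mod_lt _ hn,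
    Nat.mod_lt _ two_pos, Nat.mod_lt _ hn, Nat.mod_lt _ hn, Nat.mod_lt _ hn, Nat.mod_lt _ hn, ?_⟩
  · simp only [Nat.div_div_eq_div_mul]
    exact Nat.div_lt_of_lt_mul (by ring_nf; linarith)
  · simp only [pos7, Nat.div_add_mod']

/-- The two occurrences of the letter `v` in `s = (q^{⊕n})^{⊖n}`, as `pos7 n t s h c₁ c₂ c₃ c₄`:
`t` is the block of the outer skew sum, `s` the copy of `q` in it, `h` says which of the halves
`p^{⊖n²}` and `(r^{⊖n})^{⊕n}` of `q` is meant, and `c₁ … c₄` is the position inside that half. -/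
def occ (n v : ℕ) : Bool → ℕ
  | false => pos7 n (n - 1 - digit n v 5) (digit n v 4) 0
      (n - 1 - digit n v 3) (n - 1 - digit n v 2) (digit n v 1) (digit n v 0)
  | true => pos7 n (n - 1 - digit n v 5) (digit n v 4) 1
      (digit n v 3) (n - 1 - digit n v 2) (n - 1 - digit n v 1) (digit n v 0)

def letter (n i : ℕ) : ℕ :=
  let q := i / n / n / n / n
  if q % 2 = 0 then
    val6 n (n - 1 - q / 2 / n) (q / 2 % n) (n - 1 - digit n i 3) (n - 1 - digit n i 2)
      (digit n i 1) (digit n i 0)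
  else
    val6 n (n - 1 - q / 2 / n) (q / 2 % n) (digit n i 3) (n - 1 - digit n i 2)
      (n - 1 - digit n i 1) (digit n i 0)

def word (n : ℕ) : List ℕ := (List.range (2 * n ^ 6)).map (letter n)

theorem letter_pos7 {n t s h c₁ c₂ c₃ c₄ : ℕ} (hs : s < n) (hh : h < 2) (h₁ : c₁ < n)
    (h₂ : c₂ < n) (h₃ : c₃ < n) (h₄ : c₄ < n) :
    letter n (pos7 n t s h c₁ c₂ c₃ c₄) =
      if h = 0 then val6 n (n - 1 - t) s (n - 1 - c₁) (n - 1 - c₂) c₃ c₄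
      else val6 n (n - 1 - t) s c₁ (n - 1 - c₂) (n - 1 - c₃) c₄ := by
  simp (disch := assumption) only [letter, pos7, digit_succ, digit_zero, mul_add_div_of_lt,
    mul_add_mod_of_lt]

theorem letter_lt {n i : ℕ} (hi : i < 2 * n ^ 6) : letter n i < n ^ 6 := by
  obtain ⟨t, s, h, c₁, c₂, c₃, c₄, ht, hs, hh, h₁, h₂, h₃, h₄, rfl⟩ := exists_pos7 hi
  rw [letter_pos7 hs hh h₁ h₂ h₃ h₄]
  split_ifs <;> apply val6_lt <;> omega

theorem letter_occ {n v : ℕ} (hv : v < n ^ 6) (b : Bool) : letter n (occ n v b) = v := by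
  have hn : 0 < n := Nat.pos_of_ne_zero (by rintro rfl; simp at hv)
  obtain ⟨h₅, h₄, h₃, h₂, h₁, h₀⟩ := digits_lt hn v
  conv_rhs => rw [← val6_digit hv]
  cases b <;> rw [occ, letter_pos7 h₄ (by omega) (by omega) (by omega) (by omega) h₀] <;>
    simp only [if_pos, one_ne_zero, if_false] <;> congr 1 <;> omega

theorem occ_lt {n v : ℕ} (hv : v < n ^ 6) (b : Bool) : occ n v b < 2 * n ^ 6 := by
  have hn : 0 < n := Nat.pos_of_ne_zero (by rintro rfl; simp at hv)
  obtain ⟨h₅, h₄, h₃, h₂, h₁, h₀⟩ := digits_lt hn v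
  cases b <;> apply pos7_lt <;> omega

theorem occ_false_lt_occ_true {n : ℕ} (hn : 0 < n) (v : ℕ) :
    occ n v false < occ n v true := by
  obtain ⟨h₅, h₄, h₃, h₂, h₁, h₀⟩ := digits_lt hn v
  simp (disch := omega) only [occ, pos7, mul_add_lt_mul_add_iff_of_lt,
    mul_add_eq_mul_add_iff_of_lt, true_and]
  omega

theorem exists_occ_letter {n i : ℕ} (hi : i < 2 * n ^ 6) :
    ∃ b, occ n (letter n i) b = i := by
  obtain ⟨t, s, h, c₁, c₂, c₃, c₄, ht, hs, hh, h₁, h₂, h₃, h₄, rfl⟩ := exists_pos7 hi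
  rw [letter_pos7 hs hh h₁ h₂ h₃ h₄]
  split_ifs with hq
  · obtain ⟨e₁, e₂, e₃, e₄, e₅, e₆⟩ := digit_val6 (n := n) (by omega : n - 1 - t < n) hs
      (by omega : n - 1 - c₁ < n) (by omega : n - 1 - c₂ < n) h₃ h₄
    refine ⟨false, ?_⟩
    rw [occ, e₁, e₂, e₃, e₄, e₅, e₆, hq]
    congr 1 <;> omega
  · obtain ⟨e₁, e₂, e₃, e₄, e₅, e₆⟩ := digit_val6 (n := n) (by omega : n - 1 - t < n) hs h₁
      (by omega : n - 1 - c₂ < n) (by omega : n - 1 - c₃ < n) h₄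
    refine ⟨true, ?_⟩
    rw [occ, e₁, e₂, e₃, e₄, e₅, e₆]
    congr 1 <;> omega

theorem occ_eq_of_letter_eq {n i j : ℕ} (hij : i < j) (hj : j < 2 * n ^ 6)
    (h : letter n i = letter n j) :
    occ n (letter n i) false = i ∧ occ n (letter n i) true = j := by
  have hn : 0 < n := Nat.pos_of_ne_zero (by rintro rfl; simp at hj)
  obtain ⟨b, hb⟩ := exists_occ_letter (hij.trans hj)
  obtain ⟨c, hc⟩ := exists_occ_letter hj
  rw [← h] at hc
  have := occ_false_lt_occ_true hn (letter n i)
  cases b <;> cases c <;> simp_all; omega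

theorem getElem?_word {n k a : ℕ} :
    (word n)[k]? = some a ↔ k < 2 * n ^ 6 ∧ letter n k = a := by
  rw [word, List.getElem?_map]
  by_cases hk : k < 2 * n ^ 6 <;> simp [hk]

theorem repeats_word (n : ℕ) : repeats (word n) = n ^ 6 := by
  have hlen : (word n).length = 2 * n ^ 6 := by simp [word]
  have hget (i : Fin (word n).length) : (word n).get i = letter n i := by
    rw [List.get_eq_getElem]; simp [word]
  rw [repeats, ← Finset.card_range (n ^ 6)]
  refine Finset.card_bij (fun i _ => letter n i) ?_ ?_ ?_
  · intro i _
    exact Finset.mem_range.mpr (letter_lt (hlen ▸ i.isLt))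
  · intro i hi i' hi' h
    simp only [Finset.mem_filter, Finset.mem_univ, true_and, hget] at hi hi'
    obtain ⟨j, hji, hj⟩ := hi
    obtain ⟨j', hji', hj'⟩ := hi'
    have e := (occ_eq_of_letter_eq hji (hlen ▸ i.isLt) hj).2
    have e' := (occ_eq_of_letter_eq hji' (hlen ▸ i'.isLt) hj').2
    rw [hj, h, ← hj'] at e
    exact Fin.ext (e.symm.trans e')
  · intro v hv
    have hv' := Finset.mem_range.mp hv
    refine ⟨⟨occ n v true, hlen ▸ occ_lt hv' true⟩, ?_, letter_occ hv' true⟩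
    simp only [Finset.mem_filter, Finset.mem_univ, true_and, hget]
    refine ⟨⟨occ n v false, hlen ▸ occ_lt hv' false⟩, ?_, ?_⟩
    · exact occ_false_lt_occ_true (Nat.pos_of_ne_zero (by rintro rfl; simp at hv')) v
    · simp only [letter_occ hv']

theorem exists_orderEmbedding_of_contains {n : ℕ} {p : List ℕ} (h : Contains (word n) p) :
    ∃ σ : ℕ ↪o ℕ, ∀ i j x y, p[i]? = some x → p[j]? = some y →
      σ i < 2 * n ^ 6 ∧ cmp (letter n (σ i)) (letter n (σ j)) = cmp x y := by
  obtain ⟨σ, hσ⟩ := h.exists_orderEmbedding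
  refine ⟨σ, fun i j x y hx hy => ?_⟩
  obtain ⟨a, b, ha, hb, hab⟩ := hσ i j x y hx hy
  rw [getElem?_word] at ha hb
  exact ⟨ha.1, ha.2 ▸ hb.2 ▸ hab⟩

theorem not_contains_replicate_three (n : ℕ) : ¬ Contains (word n) (List.replicate 3 0) := by
  intro h
  obtain ⟨σ, hσ⟩ := exists_orderEmbedding_of_contains h
  have hrep (k : ℕ) (hk : k < 3) : (List.replicate 3 0)[k]? = some 0 :=
    List.getElem?_replicate_of_lt hk
  have hσ₀ := hσ 0 1 0 0 (hrep 0 (by norm_num)) (hrep 1 (by norm_num))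
  have hσ₁ := hσ 1 2 0 0 (hrep 1 (by norm_num)) (hrep 2 (by norm_num))
  have hσ₂ := hσ 2 0 0 0 (hrep 2 (by norm_num)) (hrep 0 (by norm_num))
  simp only [cmp_self_eq_eq, cmp_eq_eq_iff] at hσ₀ hσ₁ hσ₂
  have hn : 0 < n := Nat.pos_of_ne_zero (by rintro rfl; simp at hσ₂)
  have e₀ := occ_eq_of_letter_eq (σ.strictMono zero_lt_one) hσ₁.1 hσ₀.2
  have e₁ := occ_eq_of_letter_eq (σ.strictMono one_lt_two) hσ₂.1 hσ₁.2
  rw [hσ₀.2] at e₀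
  have := occ_false_lt_occ_true hn (letter n (σ 1))
  omega

theorem exists_letters_of_contains {n : ℕ} {p : List ℕ} (h : Contains (word n) p)
    (π : Bool → ℕ → ℕ) (hp : ∀ k ≤ n, ∀ b, p[π b k]? = some k)
    (hπ : ∀ k ≤ n, π false k < π true k) :
    ∃ v : ℕ → ℕ, (∀ k ≤ n, v k < n ^ 6) ∧ (∀ k < n, v k < v (k + 1)) ∧
      ∀ k ≤ n, ∀ l ≤ n, ∀ b c, π b k < π c l → occ n (v k) b < occ n (v l) c := by
  obtain ⟨σ, hσ⟩ := exists_orderEmbedding_of_contains h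
  have hocc : ∀ k ≤ n, ∀ b, occ n (letter n (σ (π false k))) b = σ (π b k) := by
    intro k hk b
    obtain ⟨-, hσk⟩ := hσ _ _ _ _ (hp k hk false) (hp k hk true)
    obtain ⟨hσk', -⟩ := hσ _ _ _ _ (hp k hk true) (hp k hk false)
    rw [cmp_self_eq_eq, cmp_eq_eq_iff] at hσk
    have := occ_eq_of_letter_eq (σ.strictMono (hπ k hk)) hσk' hσk
    cases b
    exacts [this.1, this.2]
  refine ⟨fun k => letter n (σ (π false k)), fun k hk => ?_, fun k hk => ?_, ?_⟩
  · exact letter_lt (hσ _ _ _ _ (hp k hk false) (hp k hk false)).1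
  · have := (hσ _ _ _ _ (hp k hk.le false) (hp (k + 1) hk false)).2
    rwa [(cmp_eq_lt_iff _ _).mpr k.lt_succ_self, cmp_eq_lt_iff] at this
  · intro k hk l hl b c hkl
    rw [hocc k hk, hocc l hl]
    exact σ.strictMono hkl

theorem exists_digit_succ_le {n : ℕ} (hn : 0 < n) (v : ℕ → ℕ) (j : ℕ) :
    ∃ k < n, digit n (v (k + 1)) j ≤ digit n (v k) j := by
  by_contra! h
  exact (digit_lt hn (v n) j).not_ge (le_of_forall_lt_succ (f := fun k => digit n (v k) j) h)

theorem not_contains_of_digit_lt {n : ℕ} {p : List ℕ} (π : Bool → ℕ → ℕ)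
    (hp : ∀ k ≤ n, ∀ b, p[π b k]? = some k) (hπ : ∀ k ≤ n, π false k < π true k) (j : ℕ)
    (hdigit : ∀ k < n, ∀ u v, u < v → v < n ^ 6 →
      (∀ b c, (π b k < π c (k + 1) → occ n u b < occ n v c) ∧
        (π c (k + 1) < π b k → occ n v c < occ n u b)) →
      digit n u j < digit n v j) :
    ¬ Contains (word n) p := by
  intro h
  obtain ⟨v, hv, hmono, hocc⟩ := exists_letters_of_contains h π hp hπ
  have hn : 0 < n := Nat.pos_of_ne_zero (by rintro rfl; simp at hv)
  obtain ⟨k, hk, hle⟩ := exists_digit_succ_le hn v j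
  exact hle.not_gt (hdigit k hk _ _ (hmono k hk) (hv (k + 1) hk) fun b c =>
    ⟨hocc k hk.le (k + 1) hk b c, hocc (k + 1) hk k hk.le c b⟩)

/-! For letters `u < v` of the word, the order of their four occurrences pins down the highest
digit in which `u` and `v` differ; `aabb` lists the occurrences of `a = u` and `b = v`. -/

theorem digit_four_lt_of_aabb {n u v : ℕ} (huv : u < v) (hv : v < n ^ 6)
    (h : occ n u true < occ n v false) :
    digit n u 4 < digit n v 4 := by
  have hn : 0 < n := Nat.pos_of_ne_zero (by rintro rfl; simp at hv)
  have := digits_lt hn u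
  have := digits_lt hn v
  rw [← val6_digit (huv.trans hv), ← val6_digit hv] at huv
  simp (disch := omega) only [occ, pos7, val6, mul_add_lt_mul_add_iff_of_lt,
    mul_add_eq_mul_add_iff_of_lt] at *
  omega

theorem digit_five_lt_of_bbaa {n u v : ℕ} (huv : u < v) (hv : v < n ^ 6)
    (h : occ n v true < occ n u false) :
    digit n u 5 < digit n v 5 := by
  have hn : 0 < n := Nat.pos_of_ne_zero (by rintro rfl; simp at hv)
  have := digits_lt hn u
  have := digits_lt hn v
  rw [← val6_digit (huv.trans hv), ← val6_digit hv] at huv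
  simp (disch := omega) only [occ, pos7, val6, mul_add_lt_mul_add_iff_of_lt,
    mul_add_eq_mul_add_iff_of_lt] at *
  omega

theorem digit_zero_lt_of_abab {n u v : ℕ} (huv : u < v) (hv : v < n ^ 6)
    (h₁ : occ n u false < occ n v false) (h₂ : occ n v false < occ n u true)
    (h₃ : occ n u true < occ n v true) :
    digit n u 0 < digit n v 0 := by
  have hn : 0 < n := Nat.pos_of_ne_zero (by rintro rfl; simp at hv)
  have := digits_lt hn u
  have := digits_lt hn v
  rw [← val6_digit (huv.trans hv), ← val6_digit hv] at huv
  simp (disch := omega) only [occ, pos7, val6, mul_add_lt_mul_add_iff_of_lt,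
    mul_add_eq_mul_add_iff_of_lt] at *
  omega

theorem digit_one_lt_of_abba {n u v : ℕ} (huv : u < v) (hv : v < n ^ 6)
    (h₁ : occ n u false < occ n v false) (h₂ : occ n v true < occ n u true) :
    digit n u 1 < digit n v 1 := by
  have hn : 0 < n := Nat.pos_of_ne_zero (by rintro rfl; simp at hv)
  have := digits_lt hn u
  have := digits_lt hn v
  rw [← val6_digit (huv.trans hv), ← val6_digit hv] at huv
  simp (disch := omega) only [occ, pos7, val6, mul_add_lt_mul_add_iff_of_lt,
    mul_add_eq_mul_add_iff_of_lt] at *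
  omega

theorem digit_three_lt_of_baab {n u v : ℕ} (huv : u < v) (hv : v < n ^ 6)
    (h₁ : occ n v false < occ n u false) (h₂ : occ n u true < occ n v true) :
    digit n u 3 < digit n v 3 := by
  have hn : 0 < n := Nat.pos_of_ne_zero (by rintro rfl; simp at hv)
  have := digits_lt hn u
  have := digits_lt hn v
  rw [← val6_digit (huv.trans hv), ← val6_digit hv] at huv
  simp (disch := omega) only [occ, pos7, val6, mul_add_lt_mul_add_iff_of_lt,
    mul_add_eq_mul_add_iff_of_lt] at *
  omega

theorem digit_two_lt_of_baba {n u v : ℕ} (huv : u < v) (hv : v < n ^ 6)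
    (h₁ : occ n v false < occ n u false) (h₂ : occ n u false < occ n v true)
    (h₃ : occ n v true < occ n u true) :
    digit n u 2 < digit n v 2 := by
  have hn : 0 < n := Nat.pos_of_ne_zero (by rintro rfl; simp at hv)
  have := digits_lt hn u
  have := digits_lt hn v
  rw [← val6_digit (huv.trans hv), ← val6_digit hv] at huv
  simp (disch := omega) only [occ, pos7, val6, mul_add_lt_mul_add_iff_of_lt,
    mul_add_eq_mul_add_iff_of_lt] at *
  omega

theorem repPat_two (n : ℕ) : repPat 2 n = (List.range (2 * (n + 1))).map (· / 2) := by
  induction n with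
  | zero => rfl
  | succ n ih =>
    rw [repPat, List.range_succ, List.flatMap_append, ← repPat, ih,
      show 2 * (n + 1 + 1) = 2 * (n + 1) + 1 + 1 by ring, List.range_succ, List.range_succ]
    simp only [List.map_append, List.map_cons, List.map_nil, List.flatMap_cons,
      List.flatMap_nil, List.append_nil, List.replicate, List.append_assoc, List.cons_append,
      List.nil_append]
    congr 3 <;> omega

theorem getElem?_repPat_two {n i k : ℕ} :
    (repPat 2 n)[i]? = some k ↔ i < 2 * (n + 1) ∧ i / 2 = k := by
  rw [repPat_two, List.getElem?_map]
  by_cases hi : i < 2 * (n + 1) <;> simp [hi]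

theorem getElem?_reverse_repPat_two {n i : ℕ} (hi : i < 2 * (n + 1)) :
    (repPat 2 n).reverse[i]? = some ((2 * n + 1 - i) / 2) := by
  have hlen : (repPat 2 n).length = 2 * (n + 1) := by simp [repPat_two]
  rw [List.getElem?_reverse (by omega), hlen,
    (getElem?_repPat_two (k := (2 * n + 1 - i) / 2)).mpr ⟨by omega, by omega⟩]

theorem getElem?_reverse_range {n i : ℕ} (hi : i ≤ n) :
    (List.range (n + 1)).reverse[i]? = some (n - i) := by
  rw [List.getElem?_reverse (by rw [List.length_range]; omega), List.length_range,
    List.getElem?_range (by omega), Nat.add_sub_cancel]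

theorem not_contains_repPat (n : ℕ) : ¬ Contains (word n) (repPat 2 n) :=
  not_contains_of_digit_lt (fun b k => bif b then 2 * k + 1 else 2 * k)
    (fun k hk b => by cases b <;> simp [getElem?_repPat_two] <;> omega)
    (fun k _ => by simp only [cond]; omega) 4
    fun k _ u v huv hv h =>
      digit_four_lt_of_aabb huv hv ((h true false).1 (by simp only [cond]; omega))

theorem not_contains_reverse_repPat (n : ℕ) : ¬ Contains (word n) (repPat 2 n).reverse :=
  not_contains_of_digit_lt (fun b k => bif b then 2 * (n - k) + 1 else 2 * (n - k))
    (fun k hk b => by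
      cases b <;> simp only [cond] <;> rw [getElem?_reverse_repPat_two (by omega)] <;>
        congr 1 <;> omega)
    (fun k _ => by simp only [cond]; omega) 5
    fun k _ u v huv hv h =>
      digit_five_lt_of_bbaa huv hv ((h false true).2 (by simp only [cond]; omega))

theorem not_contains_range_append_range (n : ℕ) :
    ¬ Contains (word n) (List.range (n + 1) ++ List.range (n + 1)) :=
  not_contains_of_digit_lt (fun b k => bif b then n + 1 + k else k)
    (fun k hk b => by
      cases b <;> simp only [cond]
      · rw [List.getElem?_append_left (by rw [List.length_range]; omega),
          List.getElem?_range (by omega)]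
      · rw [List.getElem?_append_right (by simp), List.length_range, Nat.add_sub_cancel_left,
          List.getElem?_range (by omega)])
    (fun k _ => by simp only [cond]; omega) 0
    fun k _ u v huv hv h =>
      digit_zero_lt_of_abab huv hv ((h false false).1 (by simp only [cond]; omega))
        ((h true false).2 (by simp only [cond]; omega))
        ((h true true).1 (by simp only [cond]; omega))

theorem not_contains_range_append_reverse_range (n : ℕ) :
    ¬ Contains (word n) (List.range (n + 1) ++ (List.range (n + 1)).reverse) :=
  not_contains_of_digit_lt (fun b k => bif b then n + 1 + (n - k) else k)
    (fun k hk b => by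
      cases b <;> simp only [cond]
      · rw [List.getElem?_append_left (by rw [List.length_range]; omega),
          List.getElem?_range (by omega)]
      · rw [List.getElem?_append_right (by simp), List.length_range, Nat.add_sub_cancel_left,
          getElem?_reverse_range (by omega)]
        congr 1; omega)
    (fun k _ => by simp only [cond]; omega) 1
    fun k _ u v huv hv h =>
      digit_one_lt_of_abba huv hv ((h false false).1 (by simp only [cond]; omega))
        ((h true true).2 (by simp only [cond]; omega))

theorem not_contains_reverse_range_append_range (n : ℕ) :
    ¬ Contains (word n) ((List.range (n + 1)).reverse ++ List.range (n + 1)) :=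
  not_contains_of_digit_lt (fun b k => bif b then n + 1 + k else n - k)
    (fun k hk b => by
      cases b <;> simp only [cond]
      · rw [List.getElem?_append_left (by rw [List.length_reverse, List.length_range]; omega),
          getElem?_reverse_range (by omega)]
        congr 1; omega
      · rw [List.getElem?_append_right (by simp), List.length_reverse, List.length_range,
          Nat.add_sub_cancel_left, List.getElem?_range (by omega)])
    (fun k _ => by simp only [cond]; omega) 3
    fun k _ u v huv hv h =>
      digit_three_lt_of_baab huv hv ((h false false).2 (by simp only [cond]; omega))
        ((h true true).1 (by simp only [cond]; omega))

theorem not_contains_reverse_range_append_reverse_range (n : ℕ) :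
    ¬ Contains (word n) ((List.range (n + 1)).reverse ++ (List.range (n + 1)).reverse) :=
  not_contains_of_digit_lt (fun b k => bif b then n + 1 + (n - k) else n - k)
    (fun k hk b => by
      cases b <;> simp only [cond]
      · rw [List.getElem?_append_left (by rw [List.length_reverse, List.length_range]; omega),
          getElem?_reverse_range (by omega)]
        congr 1; omega
      · rw [List.getElem?_append_right (by simp), List.length_reverse, List.length_range,
          Nat.add_sub_cancel_left, getElem?_reverse_range (by omega)]
        congr 1; omega)
    (fun k _ => by simp only [cond]; omega) 2
    fun k _ u v huv hv h =>
      digit_two_lt_of_baba huv hv ((h false false).2 (by simp only [cond]; omega))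
        ((h false true).1 (by simp only [cond]; omega))
        ((h true true).2 (by simp only [cond]; omega))

end PatternWord

theorem stmt_11 (n : ℕ) :
    ∃ w : List ℕ, repeats w = n ^ 6 ∧
      ¬ Contains w (List.replicate 3 0) ∧
      (∀ e ∈ ({id, List.reverse} : Set (List ℕ → List ℕ)),
        ¬ Contains w (e (repPat 2 n))) ∧
      (∀ e₁ ∈ ({id, List.reverse} : Set (List ℕ → List ℕ)),
        ∀ e₂ ∈ ({id, List.reverse} : Set (List ℕ → List ℕ)),
          ¬ Contains w (e₁ (List.range (n + 1)) ++ e₂ (List.range (n + 1)))) := by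
  refine ⟨PatternWord.word n, PatternWord.repeats_word n,
    PatternWord.not_contains_replicate_three n, ?_, ?_⟩
  · rintro e (rfl | rfl)
    exacts [PatternWord.not_contains_repPat n, PatternWord.not_contains_reverse_repPat n]
  · rintro e₁ (rfl | rfl) e₂ (rfl | rfl)
    exacts [PatternWord.not_contains_range_append_range n,
      PatternWord.not_contains_range_append_reverse_range n,
      PatternWord.not_contains_reverse_range_append_range n,
      PatternWord.not_contains_reverse_range_append_reverse_range n]
end
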